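/- arXiv:1701.05547 — 6 statements merged into one kernel-verified Lean document; each statement's English description precedes it below -/
import Mathlib

section
/- For every ρ ∈ [0.27, 1), one has 1/(2σ_c) + s/σ_c ≥ 1 − 2s, where s = arcsin(ρ)/π and σ_c = √(1/2 − s²). (Equivalently, with ψ_pc = 1/(2σ_c), ψ̃ = s/σ_c and ψ_me = 2s, the irrepresentability quantity (ψ_pc + ψ̃)/(1 − ψ_me) is at least 1; this is the inequality establishing Theorem 2 part (b), the selection inconsistency of the LASSO for a model with two active main effects when ρ ≥ 0.27.) -/
/-- For every `ρ ∈ [0.27, 1)`, with `s = arcsin ρ / π` and `σ_c = √(1/2 − s²)`,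
one has `1/(2σ_c) + s/σ_c ≥ 1 − 2s` (the irrepresentability violation proving
Theorem 2 part (b)). -/
theorem lasso_inconsistent_two_mains (ρ : ℝ) (h1 : 0.27 ≤ ρ) (h2 : ρ < 1) :
    1 / (2 * Real.sqrt (1 / 2 - (Real.arcsin ρ / Real.pi) ^ 2)) +
        (Real.arcsin ρ / Real.pi) / Real.sqrt (1 / 2 - (Real.arcsin ρ / Real.pi) ^ 2)
      ≥ 1 - 2 * (Real.arcsin ρ / Real.pi) := by
  have hπ : 0 < Real.pi := Real.pi_pos
  have hπ315 : Real.pi < 3.15 := Real.pi_lt_d2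
  set s : ℝ := Real.arcsin ρ / Real.pi with hsdef
  have hρ0 : (0:ℝ) ≤ ρ := by linarith
  have ha0 : 0 ≤ Real.arcsin ρ := Real.arcsin_nonneg.2 hρ0
  have haρ : ρ ≤ Real.arcsin ρ := by
    have h := Real.sin_le ha0
    rwa [Real.sin_arcsin (by linarith) h2.le] at h
  have hslb : (27:ℝ)/315 ≤ s := by
    rw [hsdef, le_div_iff₀ hπ]
    nlinarith
  have hsub : s < 1/2 := by
    have h := Real.arcsin_lt_pi_div_two.2 h2
    rw [hsdef, div_lt_iff₀ hπ]
    linarith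
  have hs0 : 0 ≤ s := by positivity
  have hpos : (0:ℝ) < 1/2 - s^2 := by nlinarith
  have hσ : 0 < Real.sqrt (1/2 - s^2) := Real.sqrt_pos.2 hpos
  have hσ2 : Real.sqrt (1/2 - s^2) ^ 2 = 1/2 - s^2 := Real.sq_sqrt hpos.le
  have key : (1 - 2*s) * Real.sqrt (1/2 - s^2) ≤ 1/2 + s := by
    nlinarith [hσ2, hσ, sq_nonneg (Real.sqrt (1/2 - s^2) - (1/2 + s)),
      sq_nonneg (s - 27/315), mul_nonneg hs0 hσ.le,
      mul_nonneg (mul_nonneg hs0 hs0) hσ.le]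
  have h1σ : 1 / (2 * Real.sqrt (1/2 - s^2)) + s / Real.sqrt (1/2 - s^2)
      = (1/2 + s) / Real.sqrt (1/2 - s^2) := by
    field_simp
  have hfin : 1 - 2*s ≤ (1/2 + s) / Real.sqrt (1/2 - s^2) := (le_div_iff₀ hσ).2 key
  linarith
end

section
/- Let q ≥ 3 be an integer and ρ ∈ [0,1). Set a := (1/4 − s/2 − s²)/σ_c² and b := (1/4 + s/2 − s²)/σ_c², and let C ∈ ℝ^{q×q} be the symmetric matrix with C_{ii} = 1 for all i, C_{1i} = C_{i1} = a for all i ≠ 1, and C_{ij} = b for all i, j ≥ 2 with i ≠ j. If C is invertible, then (1/(2σ_c))·|𝟙ᵀ C⁻¹ 𝟙| ≥ 1, where 𝟙 ∈ ℝ^q is the all-ones vector. (This is the violation of the irrepresentability condition |C₂₁ C₁₁⁻¹ ζ| ≥ 1 with ζ = 𝟙 establishing Theorem 2 part (a): the LASSO is selection inconsistent for a model with q ≥ 3 active sibling CMEs for all ρ ≥ 0.) -/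
open Matrix

lemma key_poly (s Q : ℝ) (h0 : 0 ≤ s) (h1 : 2*s ≤ 1) (hQ : 3 ≤ Q) :
    4*(1/16 + Q/16 - 3/4*s + 1/2*s*Q + 1/4*s^2 - 1/2*s^2*Q + 2*s^3 - 3/2*s^3*Q)^2
      ≤ (1/2 - s^2)*(Q/4 - 2*s + 3/2*s*Q)^2 := by
  nlinarith [sq_nonneg (1-2*s), sq_nonneg s, mul_nonneg h0 (sub_nonneg.2 h1), sq_nonneg (Q-3), mul_nonneg (sub_nonneg.2 hQ) h0, mul_nonneg (sub_nonneg.2 hQ) (sub_nonneg.2 h1), sq_nonneg (s*Q), sq_nonneg (s*(1-2*s)), mul_nonneg (mul_nonneg h0 h0) (sub_nonneg.2 h1), sq_nonneg ((1-2*s)*Q)]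

lemma sum_ite_one (q : ℕ) (hq : 3 ≤ q) (u w : ℝ) :
    ∑ j : Fin q, (if (j : ℕ) = 0 then u else w) = u + ((q : ℝ) - 1) * w := by
  have hq0 : 0 < q := by omega
  set z : Fin q := ⟨0, hq0⟩ with hz
  rw [← Finset.add_sum_erase _ _ (Finset.mem_univ z)]
  have h1 : ∀ j ∈ Finset.univ.erase z, (if (j : ℕ) = 0 then u else w) = w := by
    intro j hj
    rw [Finset.mem_erase] at hj
    have : (j : ℕ) ≠ 0 := fun h => hj.1 (Fin.ext h)
    simp [this]
  rw [Finset.sum_congr rfl h1, Finset.sum_const, Finset.card_erase_of_mem (Finset.mem_univ z)]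
  simp only [Finset.card_univ, Fintype.card_fin, nsmul_eq_mul]
  have : ((q - 1 : ℕ) : ℝ) = (q : ℝ) - 1 := by
    rw [Nat.cast_sub (by omega : 1 ≤ q)]; norm_num
  rw [this]
  simp [hz]

lemma sum_ite_two (q : ℕ) (hq : 3 ≤ q) (i : Fin q) (hi : (i : ℕ) ≠ 0) (u v w : ℝ) :
    ∑ j : Fin q, (if (j : ℕ) = 0 then u else if j = i then v else w)
      = u + v + ((q : ℝ) - 2) * w := by
  have hq0 : 0 < q := by omega
  set z : Fin q := ⟨0, hq0⟩ with hz
  rw [← Finset.add_sum_erase _ _ (Finset.mem_univ z)]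
  have hiz : i ∈ Finset.univ.erase z := by
    rw [Finset.mem_erase]
    exact ⟨fun h => hi (by rw [h]), Finset.mem_univ i⟩
  rw [← Finset.add_sum_erase _ _ hiz]
  have h1 : ∀ j ∈ (Finset.univ.erase z).erase i,
      (if (j : ℕ) = 0 then u else if j = i then v else w) = w := by
    intro j hj
    rw [Finset.mem_erase, Finset.mem_erase] at hj
    have h2 : (j : ℕ) ≠ 0 := fun h => hj.2.1 (Fin.ext h)
    simp [h2, hj.1]
  rw [Finset.sum_congr rfl h1, Finset.sum_const,
    Finset.card_erase_of_mem hiz, Finset.card_erase_of_mem (Finset.mem_univ z)]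
  simp only [Finset.card_univ, Fintype.card_fin, nsmul_eq_mul]
  have : ((q - 1 - 1 : ℕ) : ℝ) = (q : ℝ) - 2 := by
    rw [show q - 1 - 1 = q - 2 from by omega, Nat.cast_sub (by omega : 2 ≤ q)]; norm_num
  rw [this]
  have hzv : ((z : Fin q) : ℕ) = 0 := rfl
  simp only [hzv, hi, if_pos rfl, if_neg hi, if_true, if_false, eq_self_iff_true]
  norm_num
  ring

set_option maxHeartbeats 1000000 in
/-- Theorem 2 part (a): violation of the irrepresentability condition for a model
with `q ≥ 3` active sibling CMEs, for all `ρ ≥ 0`. -/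
theorem lasso_inconsistent_siblings (q : ℕ) (hq : 3 ≤ q) (ρ : ℝ)
    (hρ0 : 0 ≤ ρ) (hρ1 : ρ < 1)
    (s σc a b : ℝ) (hs : s = Real.arcsin ρ / Real.pi) (hσ : σc = Real.sqrt (1 / 2 - s ^ 2))
    (ha : a = (1 / 4 - s / 2 - s ^ 2) / σc ^ 2) (hb : b = (1 / 4 + s / 2 - s ^ 2) / σc ^ 2)
    (C : Matrix (Fin q) (Fin q) ℝ)
    (hC : C = Matrix.of fun i j : Fin q =>
      if i = j then (1 : ℝ) else if i.val = 0 ∨ j.val = 0 then a else b)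
    (hinv : IsUnit C) :
    1 / (2 * σc) * |(fun _ : Fin q => (1 : ℝ)) ⬝ᵥ (C⁻¹ *ᵥ fun _ : Fin q => (1 : ℝ))| ≥ 1 := by
  have hπ : 0 < Real.pi := Real.pi_pos
  -- bounds on s
  have hs0 : 0 ≤ s := by
    rw [hs]
    exact div_nonneg (Real.arcsin_nonneg.2 hρ0) hπ.le
  have hs1 : s < 1 / 2 := by
    rw [hs, div_lt_iff₀ hπ]
    have := (Real.arcsin_lt_pi_div_two (x := ρ)).2 hρ1
    linarith
  have ht : (0:ℝ) < 1 / 2 - s ^ 2 := by nlinarith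
  have hσc : σc ^ 2 = 1 / 2 - s ^ 2 := by
    rw [hσ, Real.sq_sqrt ht.le]
  have hσpos : 0 < σc := by
    rw [hσ]; exact Real.sqrt_pos.2 ht
  set Q : ℝ := (q : ℝ) with hQdef
  have hQ : (3:ℝ) ≤ Q := by rw [hQdef]; exact_mod_cast hq
  -- clean forms of a, b
  have hat : a * (1 / 2 - s ^ 2) = 1 / 4 - s / 2 - s ^ 2 := by
    rw [ha, hσc]; exact div_mul_cancel₀ _ ht.ne'
  have hbt : b * (1 / 2 - s ^ 2) = 1 / 4 + s / 2 - s ^ 2 := by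
    rw [hb, hσc]; exact div_mul_cancel₀ _ ht.ne'
  set D : ℝ := 1 + (Q - 2) * b - (Q - 1) * a ^ 2 with hDdef
  set M : ℝ := Q + (Q - 2) * b - 2 * (Q - 1) * a with hMdef
  have hMt : M * (1 / 2 - s ^ 2) = Q / 4 - 2 * s + 3 / 2 * s * Q := by
    rw [hMdef]
    linear_combination (Q - 2) * hbt - 2 * (Q - 1) * hat
  have hDt : D * (1 / 2 - s ^ 2) ^ 2
      = 1/16 + Q/16 - 3/4*s + 1/2*s*Q + 1/4*s^2 - 1/2*s^2*Q + 2*s^3 - 3/2*s^3*Q := by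
    rw [hDdef]
    linear_combination ((Q - 2) * (1 / 2 - s ^ 2)) * hbt
      - (Q - 1) * (a * (1 / 2 - s ^ 2) + (1 / 4 - s / 2 - s ^ 2)) * hat
  -- key inequality: 4 * (1/2 - s^2) * D^2 ≤ M^2
  have hkey : 4 * (1 / 2 - s ^ 2) * D ^ 2 ≤ M ^ 2 := by
    have h4 : 4 * (D * (1 / 2 - s ^ 2) ^ 2) ^ 2
        ≤ (1 / 2 - s ^ 2) * (M * (1 / 2 - s ^ 2)) ^ 2 := by
      rw [hMt, hDt]
      exact key_poly s Q hs0 (by linarith) hQ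
    have e1 : 4 * (D * (1 / 2 - s ^ 2) ^ 2) ^ 2
        = (4 * (1 / 2 - s ^ 2) * D ^ 2) * (1 / 2 - s ^ 2) ^ 3 := by ring
    have e2 : (1 / 2 - s ^ 2) * (M * (1 / 2 - s ^ 2)) ^ 2
        = M ^ 2 * (1 / 2 - s ^ 2) ^ 3 := by ring
    rw [e1, e2] at h4
    exact le_of_mul_le_mul_right h4 (pow_pos ht 3)
  have hMpos : 0 < M := by
    nlinarith [hMt, ht, hs0, mul_nonneg hs0 (by linarith : (0:ℝ) ≤ Q - 3)]
  -- D ≠ 0 from invertibility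
  have hDne : D ≠ 0 := by
    intro hD0
    have hq0 : 0 < q := by omega
    set v : Fin q → ℝ := fun i => if (i : ℕ) = 0 then (Q - 1) * a else -1 with hv
    have hCv : C *ᵥ v = 0 := by
      funext i
      simp only [hC, Matrix.mulVec, dotProduct, Matrix.of_apply, Pi.zero_apply]
      by_cases hi : (i : ℕ) = 0
      · have hrw : ∀ j : Fin q,
            (if i = j then (1:ℝ) else if (i:ℕ) = 0 ∨ (j:ℕ) = 0 then a else b) * v j
            = (if (j : ℕ) = 0 then (Q - 1) * a else a * (-1)) := by
          intro j
          by_cases hj : (j : ℕ) = 0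
          · have : i = j := Fin.ext (by rw [hi, hj])
            simp [hv, this, hj]
          · have : i ≠ j := fun h => hj (by rw [← h]; exact hi)
            simp [hv, this, hi, hj]
        rw [Finset.sum_congr rfl (fun j _ => hrw j), sum_ite_one q hq]
        ring
      · have hrw : ∀ j : Fin q,
            (if i = j then (1:ℝ) else if (i:ℕ) = 0 ∨ (j:ℕ) = 0 then a else b) * v j
            = (if (j : ℕ) = 0 then a * ((Q - 1) * a) else if j = i then 1 * (-1) else b * (-1)) := by
          intro j
          by_cases hj : (j : ℕ) = 0
          · have : i ≠ j := fun h => hi (by rw [h]; exact hj)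
            simp [hv, this, hj]
          · by_cases hji : j = i
            · simp [hv, hji, hj, hi]
            · have : i ≠ j := fun h => hji h.symm
              simp [hv, this, hi, hj, hji]
        rw [Finset.sum_congr rfl (fun j _ => hrw j), sum_ite_two q hq i hi]
        have : a * ((Q - 1) * a) + 1 * (-1) + (Q - 2) * (b * (-1)) = -D := by
          rw [hDdef]; ring
        rw [this, hD0, neg_zero]
    have hdet : IsUnit C.det := (Matrix.isUnit_iff_isUnit_det C).1 hinv
    have hv0 : v = 0 := by
      have h1 : C⁻¹ *ᵥ (C *ᵥ v) = C⁻¹ *ᵥ 0 := by rw [hCv]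
      rwa [Matrix.mulVec_mulVec, Matrix.nonsing_inv_mul C hdet, Matrix.one_mulVec,
        Matrix.mulVec_zero] at h1
    have : v ⟨1, by omega⟩ = -1 := by simp [hv]
    rw [hv0] at this
    norm_num at this
  -- the explicit solution x of C x = 1
  set x0 : ℝ := (1 + (Q - 2) * b - (Q - 1) * a) / D with hx0
  set y : ℝ := (1 - a) / D with hy
  set x : Fin q → ℝ := fun i => if (i : ℕ) = 0 then x0 else y with hx
  have hCx : C *ᵥ x = (fun _ : Fin q => (1:ℝ)) := by
    funext i
    simp only [hC, Matrix.mulVec, dotProduct, Matrix.of_apply]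
    by_cases hi : (i : ℕ) = 0
    · have hrw : ∀ j : Fin q,
          (if i = j then (1:ℝ) else if (i:ℕ) = 0 ∨ (j:ℕ) = 0 then a else b) * x j
          = (if (j : ℕ) = 0 then x0 else a * y) := by
        intro j
        by_cases hj : (j : ℕ) = 0
        · have : i = j := Fin.ext (by rw [hi, hj])
          simp [hx, this, hj]
        · have : i ≠ j := fun h => hj (by rw [← h]; exact hi)
          simp [hx, this, hi, hj]
      rw [Finset.sum_congr rfl (fun j _ => hrw j), sum_ite_one q hq]
      rw [hx0, hy]
      field_simp
      ring
    · have hrw : ∀ j : Fin q,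
          (if i = j then (1:ℝ) else if (i:ℕ) = 0 ∨ (j:ℕ) = 0 then a else b) * x j
          = (if (j : ℕ) = 0 then a * x0 else if j = i then 1 * y else b * y) := by
        intro j
        by_cases hj : (j : ℕ) = 0
        · have : i ≠ j := fun h => hi (by rw [h]; exact hj)
          simp [hx, this, hj]
        · by_cases hji : j = i
          · simp [hx, hji, hj, hi]
          · have : i ≠ j := fun h => hji h.symm
            simp [hx, this, hi, hj, hji]
      rw [Finset.sum_congr rfl (fun j _ => hrw j), sum_ite_two q hq i hi]
      rw [hx0, hy]
      field_simp
      ring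
  have hdet : IsUnit C.det := (Matrix.isUnit_iff_isUnit_det C).1 hinv
  have hinvx : C⁻¹ *ᵥ (fun _ : Fin q => (1:ℝ)) = x := by
    rw [← hCx, Matrix.mulVec_mulVec, Matrix.nonsing_inv_mul C hdet, Matrix.one_mulVec]
  rw [hinvx]
  have hdot : (fun _ : Fin q => (1:ℝ)) ⬝ᵥ x = M / D := by
    simp only [dotProduct]
    have hrw : ∀ j : Fin q, 1 * x j = (if (j : ℕ) = 0 then x0 else y) := by
      intro j; simp [hx]
    rw [Finset.sum_congr rfl (fun j _ => hrw j), sum_ite_one q hq, hx0, hy, hMdef]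
    field_simp
    ring
  rw [hdot, abs_div]
  have hMabs : |M| = M := abs_of_pos hMpos
  have hDpos : 0 < |D| := abs_pos.2 hDne
  have hle : 2 * σc * |D| ≤ M := by
    have hsq : (2 * σc * |D|) ^ 2 ≤ M ^ 2 := by
      have : (2 * σc * |D|) ^ 2 = 4 * (1 / 2 - s ^ 2) * D ^ 2 := by
        rw [mul_pow, mul_pow, sq_abs, hσc]; ring
      rw [this]; exact hkey
    nlinarith [abs_nonneg D, hσpos.le, hMpos.le]
  rw [hMabs, ge_iff_le]
  have h2σ : (0:ℝ) < 2 * σc := by positivity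
  have hdiv : 2 * σc ≤ M / |D| := (le_div_iff₀ hDpos).2 hle
  have hfin : 1 / (2 * σc) * (2 * σc) ≤ 1 / (2 * σc) * (M / |D|) :=
    mul_le_mul_of_nonneg_left hdiv (by positivity)
  have h1 : 1 / (2 * σc) * (2 * σc) = 1 := by field_simp
  linarith
end

section
/- Let q ≥ 6 be an integer and ρ ∈ [0.29, 1). Set s := arcsin(ρ)/π, σ_c := √(1/2 − s²), and let C ∈ ℝ^{q×q} be the symmetric matrix with C_{ii} = 1 for all i, C_{1i} = C_{i1} = −s²/σ_c² for all i ≠ 1, and C_{ij} = (s − s²)/σ_c² for all i, j ≥ 2 with i ≠ j. Let v ∈ ℝ^q have first entry v_1 = (1/4 + s/2 − s²)/σ_c² and v_i = s/σ_c for i ≥ 2. If C is invertible, then |vᵀ C⁻¹ 𝟙| ≥ 1, where 𝟙 ∈ ℝ^q is the all-ones vector. (This is the violation of the irrepresentability condition establishing Theorem 2 part (c): the LASSO is selection inconsistent for a model with q ≥ 6 active cousin CMEs when ρ ≥ 0.29.) -/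
open Matrix

set_option maxHeartbeats 8000000

/-- Theorem 2 part (c): violation of the irrepresentability condition for a model
with `q ≥ 6` active cousin CMEs, when `ρ ≥ 0.29`. -/
theorem lasso_inconsistent_cousins (q : ℕ) (hq : 6 ≤ q) (ρ : ℝ)
    (hρ0 : 0.29 ≤ ρ) (hρ1 : ρ < 1)
    (s σc : ℝ) (hs : s = Real.arcsin ρ / Real.pi) (hσ : σc = Real.sqrt (1 / 2 - s ^ 2))
    (C : Matrix (Fin q) (Fin q) ℝ)
    (hC : C = Matrix.of fun i j : Fin q =>
      if i = j then (1 : ℝ)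
      else if i.val = 0 ∨ j.val = 0 then -s ^ 2 / σc ^ 2 else (s - s ^ 2) / σc ^ 2)
    (v : Fin q → ℝ)
    (hv : v = fun i : Fin q =>
      if i.val = 0 then (1 / 4 + s / 2 - s ^ 2) / σc ^ 2 else s / σc)
    (hinv : IsUnit C) :
    |v ⬝ᵥ (C⁻¹ *ᵥ fun _ : Fin q => (1 : ℝ))| ≥ 1 := by
  have hπ := Real.pi_pos
  have hπ3 := Real.pi_gt_three
  have hπ4 := Real.pi_lt_d6
  have hρpos : (0:ℝ) < ρ := by norm_num at hρ0 ⊢; linarith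
  -- bounds on s
  have harc : ρ ≤ Real.arcsin ρ := by
    refine (Real.le_arcsin_iff_sin_le' ⟨by linarith, by linarith⟩).mpr ?_
    exact Real.sin_le hρpos.le
  have hslb : (0.0923 : ℝ) ≤ s := by
    rw [hs, le_div_iff₀ hπ]
    norm_num at hρ0 ⊢
    nlinarith
  have hsub : s < 1/2 := by
    rw [hs, div_lt_iff₀ hπ]
    have := Real.arcsin_lt_pi_div_two.mpr hρ1
    linarith
  have hs0 : (0:ℝ) < s := by norm_num at hslb ⊢; linarith
  have hs14 : s^2 < 1/4 := by nlinarith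
  have hσ2 : σc^2 = 1/2 - s^2 := by
    rw [hσ, Real.sq_sqrt (by linarith)]
  have hσpos : (0:ℝ) < σc := by
    rw [hσ]; exact Real.sqrt_pos.mpr (by linarith)
  have hσne : σc ≠ 0 := ne_of_gt hσpos
  have hσ2ne : σc^2 ≠ 0 := pow_ne_zero 2 hσne
  have hσ4 : σc^4 = (1/2 - s^2)^2 := by
    rw [show σc^4 = (σc^2)^2 by ring, hσ2]
  -- abbreviations
  set n : ℝ := (q : ℝ) with hn
  have hn6 : (6:ℝ) ≤ n := by rw [hn]; exact_mod_cast hq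
  set A : ℝ := -s^2/σc^2 with hA
  set B : ℝ := (s-s^2)/σc^2 with hB
  set V1 : ℝ := (1/4 + s/2 - s^2)/σc^2 with hV1
  set V2 : ℝ := s/σc with hV2
  set D : ℝ := 1 + (n-2)*B - (n-1)*A^2 with hD
  clear_value n A B V1 V2 D
  -- positivity of D
  have hDσ : D*σc^4 = σc^4 + (n-2)*(s-s^2)*σc^2 - (n-1)*s^4 := by
    rw [hD, hA, hB]; field_simp
  have hDσ' : D*σc^4 = (1/2-s^2)^2 + (n-2)*(s-s^2)*(1/2-s^2) - (n-1)*s^4 := by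
    rw [hDσ, hσ4, hσ2]
  have hcube : (0:ℝ) ≤ (s/2)*(1-2*s)*(1+s) :=
    mul_nonneg (mul_nonneg (by linarith) (by linarith)) (by linarith)
  have hDpos : (0:ℝ) < D := by
    have h1 : (0:ℝ) < D*σc^4 := by
      rw [hDσ']
      nlinarith [mul_nonneg (show (0:ℝ) ≤ n - 2 by linarith) hcube]
    nlinarith [pow_pos hσpos 4]
  have hDne : D ≠ 0 := ne_of_gt hDpos
  set b : ℝ := (1-A)/D with hbdef
  set a : ℝ := 1 - (n-1)*A*b with hadef
  clear_value b a
  have hbD : b*D = 1 - A := by rw [hbdef]; field_simp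
  -- cube bound for σc
  have h414 : (1.414:ℝ)*σc ≤ 1 := by
    nlinarith [sq_nonneg ((1.414:ℝ)*σc - 1), sq_nonneg s]
  have h414b : (1.414:ℝ)*σc^2 ≤ σc := by
    nlinarith [mul_nonneg hσpos.le (show (0:ℝ) ≤ 1 - 1.414*σc by linarith)]
  have hσ3 : (1.414:ℝ)*(1/2-s^2)^2 ≤ σc^3 := by
    have h1 : (0:ℝ) ≤ σc^2*(σc - 1.414*σc^2) :=
      mul_nonneg (sq_nonneg σc) (by linarith)
    nlinarith [hσ4, h1]
  -- components
  have hAσ : A*σc^2 = -s^2 := by rw [hA]; field_simp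
  have hV1σ : V1*σc^2 = 1/4 + s/2 - s^2 := by rw [hV1]; field_simp
  have hV2σ : V2*σc = s := by rw [hV2]; field_simp
  have hc1 : (1-A)*σc^2 = 1/2 := by linear_combination hσ2 - hAσ
  have hc2 : (V2 - V1*A)*σc^4 = s*σc^3 + (1/4+s/2-s^2)*s^2 := by
    linear_combination σc^3*hV2σ + s^2*hV1σ - (V1*σc^2)*hAσ
  have hc3 : (V1-1)*σc^2 = s/2 - 1/4 := by linear_combination hV1σ - hσ2
  -- Bernstein-type nonnegativity facts
  have hp : (0:ℝ) ≤ s - 0.0923 := by linarith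
  have hqq : (0:ℝ) ≤ 1/2 - s := by linarith
  have t0 : (0:ℝ) ≤ (1/2-s)^5 := by positivity
  have t1 : (0:ℝ) ≤ (s-0.0923)*(1/2-s)^4 := by positivity
  have t2 : (0:ℝ) ≤ (s-0.0923)^2*(1/2-s)^3 := by positivity
  have t3 : (0:ℝ) ≤ (s-0.0923)^3*(1/2-s)^2 := by positivity
  have t4 : (0:ℝ) ≤ (s-0.0923)^4*(1/2-s) := by positivity
  have t5 : (0:ℝ) ≤ (s-0.0923)^5 := by positivity
  have hprod : (0:ℝ) ≤ s*(σc^3 - 1.414*(1/2-s^2)^2) :=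
    mul_nonneg hs0.le (by linarith)
  have hSred : (0:ℝ) ≤ (s/2-1/4)*((s-s^2)*(1/2-s^2) - s^4)
      + (1/2)*(s*(1.414*(1/2-s^2)^2) + (1/4+s/2-s^2)*s^2) := by
    linarith [t0, t1, t2, t3, t4, t5]
  have hVred : (0:ℝ) ≤ (s/2-1/4)*((1/2-s^2)^2 + 4*(s-s^2)*(1/2-s^2) - 5*s^4)
      + (5/2)*(s*(1.414*(1/2-s^2)^2) + (1/4+s/2-s^2)*s^2) := by
    linarith [t0, t1, t2, t3, t4, t5]
  have hSpos : (0:ℝ) ≤ (s/2-1/4)*((s-s^2)*(1/2-s^2) - s^4)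
      + (1/2)*(s*σc^3 + (1/4+s/2-s^2)*s^2) := by
    linarith [hSred, hprod]
  have hVpos : (0:ℝ) ≤ (s/2-1/4)*((1/2-s^2)^2 + 4*(s-s^2)*(1/2-s^2) - 5*s^4)
      + (5/2)*(s*σc^3 + (1/4+s/2-s^2)*s^2) := by
    linarith [hVred, hprod]
  have hL : (0:ℝ) ≤ (V1-1)*D + (n-1)*((1-A)*(V2-V1*A)) := by
    have hLσ : ((V1-1)*D + (n-1)*((1-A)*(V2-V1*A)))*σc^6
        = (s/2-1/4)*((1/2-s^2)^2 + (n-2)*(s-s^2)*(1/2-s^2) - (n-1)*s^4)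
          + (n-1)*(1/2)*(s*σc^3 + (1/4+s/2-s^2)*s^2) := by
      have e : ((V1-1)*D + (n-1)*((1-A)*(V2-V1*A)))*σc^6
          = ((V1-1)*σc^2)*(D*σc^4) + (n-1)*(((1-A)*σc^2)*((V2-V1*A)*σc^4)) := by ring
      rw [e, hc1, hc2, hc3, hDσ']
      ring
    have hsplit : (s/2-1/4)*((1/2-s^2)^2 + (n-2)*(s-s^2)*(1/2-s^2) - (n-1)*s^4)
          + (n-1)*(1/2)*(s*σc^3 + (1/4+s/2-s^2)*s^2)
        = (n-6)*((s/2-1/4)*((s-s^2)*(1/2-s^2) - s^4)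
            + (1/2)*(s*σc^3 + (1/4+s/2-s^2)*s^2))
          + ((s/2-1/4)*((1/2-s^2)^2 + 4*(s-s^2)*(1/2-s^2) - 5*s^4)
            + (5/2)*(s*σc^3 + (1/4+s/2-s^2)*s^2)) := by ring
    have hsum : (0:ℝ) ≤ ((V1-1)*D + (n-1)*((1-A)*(V2-V1*A)))*σc^6 := by
      have h7 := mul_nonneg (show (0:ℝ) ≤ n - 6 by linarith) hSpos
      linarith [hLσ, hsplit, h7, hVpos]
    exact (mul_nonneg_iff_of_pos_right (pow_pos hσpos 6)).mp hsum
  have hkey : (1:ℝ) ≤ V1*a + (n-1)*V2*b := by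
    have h0 : (V1*a + (n-1)*V2*b - 1)*D = (V1-1)*D + (n-1)*((1-A)*(V2-V1*A)) := by
      rw [hadef]; linear_combination ((n-1)*(V2 - V1*A))*hbD
    have h1 : (0:ℝ) ≤ (V1*a + (n-1)*V2*b - 1)*D := h0 ▸ hL
    have h2 := (mul_nonneg_iff_of_pos_right hDpos).mp h1
    linarith
  -- the explicit solution of C x = 1
  have hq0 : 0 < q := by omega
  set z : Fin q := ⟨0, hq0⟩ with hz
  set x : Fin q → ℝ := fun j => if j.val = 0 then a else b with hx
  clear_value x
  have hval : ∀ j : Fin q, j.val = 0 ↔ j = z := by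
    intro j; constructor
    · intro h; exact Fin.ext h
    · intro h; rw [h]
  have hcard : (Finset.univ : Finset (Fin q)).card = q := by simp
  have hCx : C *ᵥ x = fun _ => (1:ℝ) := by
    funext i
    simp only [Matrix.mulVec, dotProduct, hC, Matrix.of_apply, hx]
    by_cases hi : i.val = 0
    · have hiz : i = z := (hval i).mp hi
      have hterm : ∀ j : Fin q,
          (if i = j then (1:ℝ) else if i.val = 0 ∨ j.val = 0 then A else B)
            * (if j.val = 0 then a else b)
          = A*b + (if j = z then a - A*b else 0) := by
        intro j
        by_cases hj : j = z
        · have : i = j := by rw [hiz, hj]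
          simp [hj, this, (hval j).mpr hj, (hval z).mpr rfl]
        · have hjv : ¬ j.val = 0 := fun h => hj ((hval j).mp h)
          have hij : ¬ i = j := fun h => hj (by rw [← h, hiz])
          simp [hij, hi, hjv, hj]
      rw [Finset.sum_congr rfl (fun j _ => hterm j), Finset.sum_add_distrib,
        Finset.sum_const, hcard, Finset.sum_ite_eq' Finset.univ z (fun _ => a - A*b)]
      simp only [Finset.mem_univ, if_true, nsmul_eq_mul]
      have h1 : a + (n-1)*A*b = 1 := by rw [hadef]; ring
      rw [hn] at h1
      push_cast
      linear_combination h1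
    · have hiz : ¬ i = z := fun h => hi (by rw [h])
      have hterm : ∀ j : Fin q,
          (if i = j then (1:ℝ) else if i.val = 0 ∨ j.val = 0 then A else B)
            * (if j.val = 0 then a else b)
          = B*b + ((if j = i then b - B*b else 0) + (if j = z then A*a - B*b else 0)) := by
        intro j
        by_cases hj : j = i
        · have hjv : ¬ j.val = 0 := by rw [hj]; exact hi
          have hjz : ¬ j = z := fun h => hjv (by rw [h])
          simp [hj, hjv, hjz, hi, hiz] <;> ring
        · by_cases hjz : j = z
          · have hij : ¬ i = j := fun h => hj h.symm
            have hzi : ¬ z = i := fun h => hiz h.symm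
            simp [hij, hj, hjz, (hval j).mpr hjz, (hval z).mpr rfl, hi, hiz, hzi] <;> ring
          · have hjv : ¬ j.val = 0 := fun h => hjz ((hval j).mp h)
            have hij : ¬ i = j := fun h => hj h.symm
            simp [hij, hj, hjz, hjv, hi]
      rw [Finset.sum_congr rfl (fun j _ => hterm j), Finset.sum_add_distrib,
        Finset.sum_const, hcard, Finset.sum_add_distrib,
        Finset.sum_ite_eq' Finset.univ i (fun _ => b - B*b),
        Finset.sum_ite_eq' Finset.univ z (fun _ => A*a - B*b)]
      simp only [Finset.mem_univ, if_true, nsmul_eq_mul]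
      have heq2 : A*a + b + (n-2)*B*b = 1 := by
        rw [hadef]
        have e : A*(1 - (n-1)*A*b) + b + (n-2)*B*b = A + b*D := by rw [hD]; ring
        rw [e, hbD]; ring
      rw [hn] at heq2
      push_cast
      linear_combination heq2
  have hCinv : C⁻¹ *ᵥ (fun _ : Fin q => (1:ℝ)) = x := by
    have hdet : IsUnit C.det := (Matrix.isUnit_iff_isUnit_det C).mp hinv
    calc C⁻¹ *ᵥ (fun _ : Fin q => (1:ℝ)) = C⁻¹ *ᵥ (C *ᵥ x) := by rw [hCx]
      _ = (C⁻¹ * C) *ᵥ x := Matrix.mulVec_mulVec x C⁻¹ C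
      _ = x := by rw [Matrix.nonsing_inv_mul C hdet, Matrix.one_mulVec]
  rw [hCinv]
  have hdot : v ⬝ᵥ x = V1*a + (n-1)*V2*b := by
    simp only [dotProduct, hv, hx]
    have hterm : ∀ j : Fin q,
        (if j.val = 0 then V1 else V2) * (if j.val = 0 then a else b)
        = V2*b + (if j = z then V1*a - V2*b else 0) := by
      intro j
      by_cases hj : j = z
      · simp [(hval j).mpr hj, (hval z).mpr rfl, hj]
      · have hjv : ¬ j.val = 0 := fun h => hj ((hval j).mp h)
        simp [hjv, hj]
    rw [Finset.sum_congr rfl (fun j _ => hterm j), Finset.sum_add_distrib,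
      Finset.sum_const, hcard, Finset.sum_ite_eq' Finset.univ z (fun _ => V1*a - V2*b)]
    simp only [Finset.mem_univ, if_true, nsmul_eq_mul]
    rw [hn]
    push_cast
    ring
  rw [hdot]
  calc (1:ℝ) ≤ V1*a + (n-1)*V2*b := hkey
    _ ≤ |V1*a + (n-1)*V2*b| := le_abs_self _
end

section
/- Let n, m be positive integers, X ∈ ℝ^{n×m} with columns x_1,…,x_m, y ∈ ℝ^n, and let 𝒮 and 𝒞 be two partitions of {1,…,m}. Let λ_s, λ_c, τ > 0 and γ > 1, and suppose λ_s + λ_c ≥ max_{j=1,…,m} |x_jᵀ y|/n. If the cmenet objective Q is strictly convex on ℝ^m, then β = 0 is the unique global minimizer of Q. (Proposition 2, search rule for (λ_s, λ_c).) -/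
/-- The (scaled) MC+ inner penalty `g_{λ,γ}(β) = ∫_0^{|β|} max(1 − x/(λγ), 0) dx`. -/
noncomputable def mcPlus (lam gam b : ℝ) : ℝ :=
  ∫ x in (0 : ℝ)..|b|, max (1 - x / (lam * gam)) 0

/-- The exponential outer penalty `η_{λ,τ}(θ) = (λ²/τ)(1 − exp(−τθ/λ))`. -/
noncomputable def expPen (lam tau θ : ℝ) : ℝ :=
  lam ^ 2 / tau * (1 - Real.exp (-(tau * θ) / lam))


/-- The cmenet objective `Q(β)`. -/
noncomputable def cmenetObj (n m : ℕ) (X : Matrix (Fin n) (Fin m) ℝ) (y : Fin n → ℝ)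
    (S C : Finpartition (Finset.univ : Finset (Fin m)))
    (ls lc tau gam : ℝ) (β : Fin m → ℝ) : ℝ :=
  1 / (2 * n) * ∑ i, (y i - (X.mulVec β) i) ^ 2
    + ∑ G ∈ S.parts, expPen ls tau (∑ k ∈ G, mcPlus ls gam (β k))
    + ∑ G ∈ C.parts, expPen lc tau (∑ k ∈ G, mcPlus lc gam (β k))

lemma exp_neg_le_quad (u : ℝ) (hu : 0 ≤ u) : Real.exp (-u) ≤ 1 - u + u ^ 2 / 2 := by
  have key : ∀ v ∈ Set.Ici (0:ℝ), 0 ≤ deriv (fun w => 1 - w + w ^ 2 / 2 - Real.exp (-w)) v := by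
    intro v _
    have : deriv (fun w => 1 - w + w ^ 2 / 2 - Real.exp (-w)) v = -1 + v + Real.exp (-v) := by
      have h1 : HasDerivAt (fun w : ℝ => 1 - w + w ^ 2 / 2 - Real.exp (-w))
          (-1 + v + Real.exp (-v)) v := by
        have := ((hasDerivAt_id v).const_sub 1).add
            (((hasDerivAt_pow 2 v)).div_const 2)
        have h2 := (Real.hasDerivAt_exp (-v)).comp v ((hasDerivAt_id v).neg)
        convert this.sub h2 using 1
        push_cast
        · rfl
        · rfl
        · funext w; simp
        · norm_num
      exact h1.deriv
    rw [this]
    nlinarith [Real.add_one_le_exp (-v)]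
  have hmono : MonotoneOn (fun w => 1 - w + w ^ 2 / 2 - Real.exp (-w)) (Set.Ici (0:ℝ)) := by
    apply monotoneOn_of_deriv_nonneg (convex_Ici 0)
    · exact (Continuous.continuousOn (by continuity))
    · intro v hv
      exact (((differentiable_const 1).sub differentiable_id).add
        ((differentiable_pow 2).div_const 2)).sub
        ((Real.differentiable_exp.comp differentiable_id.neg)) |>.differentiableAt |>.differentiableWithinAt
    · intro v hv; exact key v (interior_subset hv)
  have := hmono (Set.self_mem_Ici) hu hu
  simp at this
  linarith

lemma expPen_zero (lam tau : ℝ) : expPen lam tau 0 = 0 := by simp [expPen]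

lemma expPen_lb (lam tau θ : ℝ) (hlam : 0 < lam) (htau : 0 < tau) (hθ : 0 ≤ θ) :
    lam * θ - tau / 2 * θ ^ 2 ≤ expPen lam tau θ := by
  set u := tau * θ / lam with hu
  have hu0 : 0 ≤ u := by positivity
  have key := exp_neg_le_quad u hu0
  have h1 : expPen lam tau θ = lam ^ 2 / tau * (1 - Real.exp (-u)) := by
    rw [expPen, hu]; ring_nf
  rw [h1]
  have h2 : lam ^ 2 / tau * (u - u ^ 2 / 2) = lam * θ - tau / 2 * θ ^ 2 := by
    rw [hu]; field_simp
  rw [← h2]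
  apply mul_le_mul_of_nonneg_left (by linarith) (by positivity)

lemma mcPlus_cont_int (c a b : ℝ) :
    IntervalIntegrable (fun x => max (1 - x / c) 0) MeasureTheory.volume a b :=
  (Continuous.max (continuous_const.sub (continuous_id'.div_const c)) continuous_const).intervalIntegrable a b

lemma mcPlus_nonneg (lam gam b : ℝ) : 0 ≤ mcPlus lam gam b := by
  apply intervalIntegral.integral_nonneg (abs_nonneg b)
  intro u _; exact le_max_right _ _

lemma mcPlus_le_abs (lam gam b : ℝ) (h : 0 < lam * gam) : mcPlus lam gam b ≤ |b| := by
  have : mcPlus lam gam b ≤ ∫ x in (0:ℝ)..|b|, (1:ℝ) := by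
    apply intervalIntegral.integral_mono_on (abs_nonneg b) (mcPlus_cont_int _ _ _)
      (intervalIntegrable_const)
    intro x hx
    have hx0 : 0 ≤ x := hx.1
    have : 1 - x / (lam * gam) ≤ 1 := by
      have : 0 ≤ x / (lam * gam) := by positivity
      linarith
    exact max_le this (by norm_num)
  simpa using this

lemma mcPlus_lb (lam gam b : ℝ) (h : 0 < lam * gam) :
    |b| - b ^ 2 / (2 * (lam * gam)) ≤ mcPlus lam gam b := by
  have h1 : (∫ x in (0:ℝ)..|b|, (1 - x / (lam * gam))) ≤ mcPlus lam gam b := by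
    apply intervalIntegral.integral_mono_on (abs_nonneg b)
      (((continuous_const.sub (continuous_id'.div_const _))).intervalIntegrable _ _)
      (mcPlus_cont_int _ _ _)
    intro x _; exact le_max_left _ _
  have hint : IntervalIntegrable (fun x : ℝ => x / (lam * gam)) MeasureTheory.volume 0 |b| :=
    (continuous_id'.div_const _).intervalIntegrable _ _
  have h2 : (∫ x in (0:ℝ)..|b|, (1 - x / (lam * gam)))
      = |b| - b ^ 2 / (2 * (lam * gam)) := by
    rw [intervalIntegral.integral_sub intervalIntegrable_const hint,
      intervalIntegral.integral_div, integral_id]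
    simp [sq_abs]
    ring
  linarith [h1, h2.symm.le]

lemma mcPlus_zero (lam gam : ℝ) : mcPlus lam gam 0 = 0 := by simp [mcPlus]

lemma sum_sq_le_sq_sum {ι : Type*} (s : Finset ι) (f : ι → ℝ) (hf : ∀ i ∈ s, 0 ≤ f i) :
    ∑ i ∈ s, f i ^ 2 ≤ (∑ i ∈ s, f i) ^ 2 := by
  calc ∑ i ∈ s, f i ^ 2 ≤ ∑ i ∈ s, f i * ∑ j ∈ s, f j := by
        apply Finset.sum_le_sum
        intro i hi
        have h1 := Finset.single_le_sum hf hi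
        nlinarith [hf i hi]
    _ = (∑ i ∈ s, f i) ^ 2 := by rw [← Finset.sum_mul]; ring

lemma part_sum {m : ℕ} (P : Finpartition (Finset.univ : Finset (Fin m))) (f : Fin m → ℝ) :
    ∑ G ∈ P.parts, ∑ k ∈ G, f k = ∑ k, f k := by
  conv_rhs => rw [← P.biUnion_parts]
  rw [Finset.sum_biUnion P.disjoint]
  rfl

lemma group_lb (lam tau gam : ℝ) (hlam : 0 < lam) (htau : 0 < tau) (hgam : 1 < gam)
    {ι : Type*} (G : Finset ι) (β : ι → ℝ) (t : ℝ) (ht : 0 ≤ t) :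
    t * lam * (∑ k ∈ G, |β k|)
      - t ^ 2 * ((∑ k ∈ G, β k ^ 2) / (2 * gam) + tau / 2 * (∑ k ∈ G, |β k|) ^ 2)
      ≤ expPen lam tau (∑ k ∈ G, mcPlus lam gam (t * β k)) := by
  have hc : 0 < lam * gam := by positivity
  set θ := ∑ k ∈ G, mcPlus lam gam (t * β k) with hθdef
  set A := ∑ k ∈ G, |β k| with hA
  set Sq := ∑ k ∈ G, β k ^ 2 with hSq
  have hA0 : 0 ≤ A := Finset.sum_nonneg fun k _ => abs_nonneg _
  have hθ0 : 0 ≤ θ := Finset.sum_nonneg fun k _ => mcPlus_nonneg _ _ _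
  have hub : θ ≤ t * A := by
    rw [hA, Finset.mul_sum]
    apply Finset.sum_le_sum
    intro k _
    calc mcPlus lam gam (t * β k) ≤ |t * β k| := mcPlus_le_abs _ _ _ hc
      _ = t * |β k| := by rw [abs_mul, abs_of_nonneg ht]
  have hlb : t * A - t ^ 2 * Sq / (2 * (lam * gam)) ≤ θ := by
    have h1 : ∀ k ∈ G, t * |β k| - t ^ 2 * β k ^ 2 / (2 * (lam * gam))
        ≤ mcPlus lam gam (t * β k) := by
      intro k _
      have h := mcPlus_lb lam gam (t * β k) hc
      have e1 : |t * β k| = t * |β k| := by rw [abs_mul, abs_of_nonneg ht]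
      have e2 : (t * β k) ^ 2 = t ^ 2 * β k ^ 2 := by ring
      rw [e1, e2] at h
      exact h
    calc t * A - t ^ 2 * Sq / (2 * (lam * gam))
        = ∑ k ∈ G, (t * |β k| - t ^ 2 * β k ^ 2 / (2 * (lam * gam))) := by
          rw [hA, hSq, Finset.sum_sub_distrib, ← Finset.mul_sum, ← Finset.sum_div,
            ← Finset.mul_sum]
      _ ≤ θ := Finset.sum_le_sum h1
  have hpen := expPen_lb lam tau θ hlam htau hθ0
  have hθsq : θ ^ 2 ≤ (t * A) ^ 2 := by nlinarith
  have hmul : lam * (t * A - t ^ 2 * Sq / (2 * (lam * gam))) ≤ lam * θ :=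
    mul_le_mul_of_nonneg_left hlb hlam.le
  have e : lam * (t * A - t ^ 2 * Sq / (2 * (lam * gam))) - tau / 2 * (t * A) ^ 2
      = t * lam * A - t ^ 2 * (Sq / (2 * gam) + tau / 2 * A ^ 2) := by
    field_simp
    ring
  nlinarith [hpen, hθsq, htau.le]

lemma partition_lb {m : ℕ} (P : Finpartition (Finset.univ : Finset (Fin m)))
    (lam tau gam : ℝ) (hlam : 0 < lam) (htau : 0 < tau) (hgam : 1 < gam)
    (β : Fin m → ℝ) (t : ℝ) (ht : 0 ≤ t) :
    t * lam * (∑ j, |β j|)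
      - t ^ 2 * ((∑ j, β j ^ 2) / (2 * gam) + tau / 2 * (∑ j, |β j|) ^ 2)
      ≤ ∑ G ∈ P.parts, expPen lam tau (∑ k ∈ G, mcPlus lam gam (t * β k)) := by
  have h1 : ∑ G ∈ P.parts, (t * lam * (∑ k ∈ G, |β k|)
      - t ^ 2 * ((∑ k ∈ G, β k ^ 2) / (2 * gam) + tau / 2 * (∑ k ∈ G, |β k|) ^ 2))
      ≤ ∑ G ∈ P.parts, expPen lam tau (∑ k ∈ G, mcPlus lam gam (t * β k)) :=
    Finset.sum_le_sum fun G _ => group_lb lam tau gam hlam htau hgam G β t ht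
  have e1 : ∑ G ∈ P.parts, ∑ k ∈ G, |β k| = ∑ j, |β j| := part_sum P _
  have e2 : ∑ G ∈ P.parts, ∑ k ∈ G, β k ^ 2 = ∑ j, β j ^ 2 := part_sum P _
  have hs : ∑ G ∈ P.parts, (∑ k ∈ G, |β k|) ^ 2 ≤ (∑ j, |β j|) ^ 2 := by
    rw [← e1]
    exact sum_sq_le_sq_sum _ _ fun G _ => Finset.sum_nonneg fun k _ => abs_nonneg _
  have e3 : ∑ G ∈ P.parts, (t * lam * (∑ k ∈ G, |β k|)
      - t ^ 2 * ((∑ k ∈ G, β k ^ 2) / (2 * gam) + tau / 2 * (∑ k ∈ G, |β k|) ^ 2))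
      = t * lam * (∑ j, |β j|)
        - t ^ 2 * ((∑ j, β j ^ 2) / (2 * gam)
          + tau / 2 * ∑ G ∈ P.parts, (∑ k ∈ G, |β k|) ^ 2) := by
    rw [Finset.sum_sub_distrib, ← Finset.mul_sum, e1, ← Finset.mul_sum,
      Finset.sum_add_distrib, ← Finset.sum_div, e2, ← Finset.mul_sum]
  rw [e3] at h1
  nlinarith [h1, mul_nonneg (sq_nonneg t)
    (mul_nonneg (by linarith : (0:ℝ) ≤ tau / 2) (sub_nonneg.2 hs))]

/-- Proposition 2 (search rule for `(λ_s, λ_c)`): if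
`λ_s + λ_c ≥ max_j |x_jᵀ y|/n` and `Q` is strictly convex, then `β = 0` is the
unique global minimizer of `Q`. -/
theorem cmenetObj_zero_unique_min (n m : ℕ) (hn : 0 < n) (hm : 0 < m)
    (X : Matrix (Fin n) (Fin m) ℝ) (y : Fin n → ℝ)
    (S C : Finpartition (Finset.univ : Finset (Fin m)))
    (ls lc tau gam : ℝ) (hls : 0 < ls) (hlc : 0 < lc) (htau : 0 < tau) (hgam : 1 < gam)
    (hlam : ∀ j : Fin m, |∑ i, X i j * y i| / n ≤ ls + lc)
    (hconv : StrictConvexOn ℝ Set.univ (cmenetObj n m X y S C ls lc tau gam)) :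
    ∀ β : Fin m → ℝ, β ≠ 0 →
      cmenetObj n m X y S C ls lc tau gam 0 < cmenetObj n m X y S C ls lc tau gam β := by
  set Q := cmenetObj n m X y S C ls lc tau gam with hQ
  have hN : (0:ℝ) < (n:ℝ) := by exact_mod_cast hn
  have hQ0 : Q 0 = 1 / (2 * n) * ∑ i, y i ^ 2 := by
    simp [hQ, cmenetObj, Matrix.mulVec_zero, mcPlus_zero, expPen_zero]
  -- the key quantitative lower bound
  have key : ∀ (β : Fin m → ℝ) (t : ℝ), 0 ≤ t →
      Q 0 - ((∑ j, β j ^ 2) / gam + tau * (∑ j, |β j|) ^ 2) * t ^ 2 ≤ Q (t • β) := by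
    intro β t ht
    set B := ∑ j, |β j| with hB
    set Sq := ∑ j, β j ^ 2 with hSq
    set z := X.mulVec β with hz
    have hmv : X.mulVec (t • β) = t • z := by
      rw [hz]; exact X.mulVec_smul t β
    -- inner product bound
    have hinner : ∑ i, y i * z i = ∑ j, β j * ∑ i, X i j * y i := by
      rw [hz]
      calc ∑ i, y i * X.mulVec β i = ∑ i, ∑ j, y i * (X i j * β j) := by
            apply Finset.sum_congr rfl
            intro i _
            rw [Matrix.mulVec, dotProduct, Finset.mul_sum]
        _ = ∑ j, ∑ i, y i * (X i j * β j) := Finset.sum_comm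
        _ = ∑ j, β j * ∑ i, X i j * y i := by
            apply Finset.sum_congr rfl
            intro j _
            rw [Finset.mul_sum]
            apply Finset.sum_congr rfl
            intro i _
            ring
    have habs : |∑ i, y i * z i| ≤ n * ((ls + lc) * B) := by
      rw [hinner, hB]
      calc |∑ j, β j * ∑ i, X i j * y i| ≤ ∑ j, |β j * ∑ i, X i j * y i| :=
            Finset.abs_sum_le_sum_abs _ _
        _ ≤ ∑ j, |β j| * (n * (ls + lc)) := by
            apply Finset.sum_le_sum
            intro j _
            rw [abs_mul]
            apply mul_le_mul_of_nonneg_left _ (abs_nonneg _)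
            have := hlam j
            rw [div_le_iff₀ hN] at this
            linarith [this]
        _ = n * ((ls + lc) * ∑ j, |β j|) := by
            rw [← Finset.sum_mul]
            ring
    -- quadratic part bound
    have hquad : 1 / (2 * (n:ℝ)) * ∑ i, y i ^ 2 - t * (ls + lc) * B
        ≤ 1 / (2 * n) * ∑ i, (y i - (X.mulVec (t • β)) i) ^ 2 := by
      have hexp : ∑ i, (y i - (X.mulVec (t • β)) i) ^ 2
          = ∑ i, y i ^ 2 - 2 * t * ∑ i, y i * z i + t ^ 2 * ∑ i, z i ^ 2 := by
        rw [hmv]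
        calc ∑ i, (y i - (t • z) i) ^ 2
            = ∑ i, (y i ^ 2 - 2 * t * (y i * z i) + t ^ 2 * z i ^ 2) := by
              apply Finset.sum_congr rfl
              intro i _
              simp only [Pi.smul_apply, smul_eq_mul]
              ring
          _ = ∑ i, y i ^ 2 - 2 * t * ∑ i, y i * z i + t ^ 2 * ∑ i, z i ^ 2 := by
              rw [Finset.sum_add_distrib, Finset.sum_sub_distrib, ← Finset.mul_sum,
                ← Finset.mul_sum]
      rw [hexp]
      have h1 : ∑ i, y i * z i ≤ n * ((ls + lc) * B) := le_trans (le_abs_self _) habs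
      have h2 : 0 ≤ t ^ 2 * ∑ i, z i ^ 2 :=
        mul_nonneg (sq_nonneg t) (Finset.sum_nonneg fun i _ => sq_nonneg _)
      have h3 : 0 < 1 / (2 * (n:ℝ)) := by positivity
      have h4 : 1 / (2 * (n:ℝ)) * (2 * t * (n * ((ls + lc) * B))) = t * (ls + lc) * B := by
        field_simp
      nlinarith [mul_le_mul_of_nonneg_left (mul_le_mul_of_nonneg_left h1
        (by linarith : (0:ℝ) ≤ 2 * t)) h3.le, h4, mul_nonneg h3.le h2]
    -- penalty bounds
    have hSpen := partition_lb S ls tau gam hls htau hgam β t ht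
    have hCpen := partition_lb C lc tau gam hlc htau hgam β t ht
    have hsmul : ∀ k : Fin m, (t • β) k = t * β k := fun k => rfl
    have hQt : Q (t • β) = 1 / (2 * n) * ∑ i, (y i - (X.mulVec (t • β)) i) ^ 2
        + ∑ G ∈ S.parts, expPen ls tau (∑ k ∈ G, mcPlus ls gam (t * β k))
        + ∑ G ∈ C.parts, expPen lc tau (∑ k ∈ G, mcPlus lc gam (t * β k)) := by
      simp only [hQ, cmenetObj, hsmul]
    rw [← hB, ← hSq] at hSpen hCpen
    rw [hQt, hQ0]
    have e : (Sq / gam + tau * B ^ 2) * t ^ 2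
        = t ^ 2 * (Sq / (2 * gam) + tau / 2 * B ^ 2)
          + t ^ 2 * (Sq / (2 * gam) + tau / 2 * B ^ 2) := by ring
    linarith [hquad, hSpen, hCpen, e]
  -- weak minimality from convexity
  have hge : ∀ β : Fin m → ℝ, Q 0 ≤ Q β := by
    intro β
    by_contra hcon
    push_neg at hcon
    set K := (∑ j, β j ^ 2) / gam + tau * (∑ j, |β j|) ^ 2 with hK
    have hK0 : 0 ≤ K := by
      have : 0 ≤ (∑ j, β j ^ 2) := Finset.sum_nonneg fun j _ => sq_nonneg _
      have h2 : (0:ℝ) ≤ (∑ j, |β j|) ^ 2 := sq_nonneg _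
      have hg : (0:ℝ) < gam := by linarith
      positivity
    set d := Q 0 - Q β with hd
    have hd0 : 0 < d := by rw [hd]; linarith
    clear_value K d
    obtain ⟨t, ht0, ht1, ht2⟩ : ∃ t : ℝ, 0 < t ∧ t ≤ 1 ∧ t ≤ d / (2 * (K + 1)) :=
      ⟨min 1 (d / (2 * (K + 1))), lt_min one_pos (by positivity), min_le_left _ _,
        min_le_right _ _⟩
    have hcvx := hconv.convexOn.2 (Set.mem_univ β) (Set.mem_univ 0) ht0.le
      (by linarith : (0:ℝ) ≤ 1 - t) (by ring)
    simp only [smul_zero, add_zero, smul_eq_mul] at hcvx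
    have hk := key β t ht0.le
    rw [← hK] at hk
    -- Q 0 - K t² ≤ Q(tβ) ≤ t Q β + (1-t) Q 0
    have h5 : t * (Q 0 - Q β) ≤ K * t ^ 2 := by nlinarith [hk, hcvx]
    have h6 : Q 0 - Q β ≤ K * t := by
      have h := h5.trans_eq (by ring : K * t ^ 2 = t * (K * t))
      exact (mul_le_mul_iff_right₀ ht0).mp h
    have h7 : K * t ≤ K * (d / (2 * (K + 1))) :=
      mul_le_mul_of_nonneg_left ht2 hK0
    have h8 : K * (d / (2 * (K + 1))) < d := by
      rw [mul_div_assoc', div_lt_iff₀ (by positivity : (0:ℝ) < 2 * (K + 1))]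
      nlinarith [hd0, hK0, mul_nonneg hK0 hd0.le]
    linarith [h6, h7, h8]
  -- strict minimality
  intro β hβ
  have hstrict := hconv.2 (Set.mem_univ β) (Set.mem_univ 0) hβ
    (by norm_num : (0:ℝ) < 1/2) (by norm_num : (0:ℝ) < 1/2) (by norm_num)
  simp only [smul_zero, add_zero, smul_eq_mul] at hstrict
  linarith [hge ((1/2 : ℝ) • β), hstrict]
end

section
/- Let λ, τ > 0, γ > 1, let G be a nonempty finite index set, j ∈ G, and let β̃, β ∈ ℝ^G with β_k = β̃_k for all k ≠ j. Then η_{λ,τ}(Σ_{k∈G} g_{λ,γ}(β_k)) ≤ η_{λ,τ}(Σ_{k∈G} g_{λ,γ}(β̃_k)) + Δ̃·(g_{λ,γ}(β_j) − g_{λ,γ}(β̃_j)), where Δ̃ := λ·exp(−(τ/λ)·Σ_{k∈G} g_{λ,γ}(β̃_k)); moreover equality holds when β_j = β̃_j. (The majorization property underlying Theorem 3 part (a): each linearized grouped penalty term majorizes the original grouped penalty term coordinate-wise.) -/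
lemma expPen_key (lam tau : ℝ) (hlam : 0 < lam) (htau : 0 < tau) (S d : ℝ) :
    expPen lam tau (S + d) ≤ expPen lam tau S + lam * Real.exp (-(tau / lam) * S) * d := by
  unfold expPen
  have hE : Real.exp (-(tau * (S + d)) / lam)
      = Real.exp (-(tau * S) / lam) * Real.exp (-(tau * d) / lam) := by
    rw [← Real.exp_add]; ring_nf
  have hEq : -(tau / lam) * S = -(tau * S) / lam := by ring
  rw [hEq, hE]
  set eS := Real.exp (-(tau * S) / lam) with heS
  set ed := Real.exp (-(tau * d) / lam) with hed
  have he : 0 < eS := Real.exp_pos _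
  have hx : -(tau * d) / lam + 1 ≤ ed := Real.add_one_le_exp _
  -- multiply by lam > 0 to clear the denominator
  have hx' : lam * (1 - ed) ≤ tau * d := by
    have h := mul_le_mul_of_nonneg_left hx hlam.le
    have : lam * (-(tau * d) / lam) = -(tau * d) := by field_simp
    nlinarith [this]
  rw [div_mul_eq_mul_div, div_mul_eq_mul_div, div_add' _ _ _ (ne_of_gt htau),
    div_le_div_iff₀ htau htau]
  nlinarith [mul_le_mul_of_nonneg_left hx' (mul_pos he (mul_pos hlam htau)).le]

/-- Majorization property underlying Theorem 3(a): the linearized grouped penalty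
term majorizes the original grouped penalty term coordinate-wise, with equality
when `β_j = β̃_j`. -/
theorem grouped_penalty_majorization (lam tau gam : ℝ)
    (hlam : 0 < lam) (htau : 0 < tau) (hgam : 1 < gam)
    (G : Type*) [Fintype G] [Nonempty G] (j : G) (βt β : G → ℝ)
    (hagree : ∀ k : G, k ≠ j → β k = βt k) :
    expPen lam tau (∑ k, mcPlus lam gam (β k))
        ≤ expPen lam tau (∑ k, mcPlus lam gam (βt k))
          + lam * Real.exp (-(tau / lam) * ∑ k, mcPlus lam gam (βt k))
            * (mcPlus lam gam (β j) - mcPlus lam gam (βt j))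
      ∧ (β j = βt j →
        expPen lam tau (∑ k, mcPlus lam gam (β k))
          = expPen lam tau (∑ k, mcPlus lam gam (βt k))
            + lam * Real.exp (-(tau / lam) * ∑ k, mcPlus lam gam (βt k))
              * (mcPlus lam gam (β j) - mcPlus lam gam (βt j))) := by
  have hsum : ∑ k, mcPlus lam gam (β k)
      = (∑ k, mcPlus lam gam (βt k)) + (mcPlus lam gam (β j) - mcPlus lam gam (βt j)) := by
    have : ∑ k, (mcPlus lam gam (β k) - mcPlus lam gam (βt k))
        = mcPlus lam gam (β j) - mcPlus lam gam (βt j) := by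
      rw [Finset.sum_eq_single j]
      · intro k _ hk; rw [hagree k hk]; ring
      · intro h; exact absurd (Finset.mem_univ j) h
    rw [← this, Finset.sum_sub_distrib]; ring
  constructor
  · rw [hsum]
    exact expPen_key lam tau hlam htau _ _
  · intro hj
    have hβ : β = βt := by
      funext k
      by_cases hk : k = j
      · rw [hk, hj]
      · exact hagree k hk
    rw [hβ]; ring
end

section
/- Let γ > 2, λ₁ ≥ λ₂ > 0, 0 < Δ₁ ≤ λ₁, 0 < Δ₂ ≤ λ₂, and z ∈ ℝ. Then the function h(β) := (1/2)(β − z)² + Δ₁·g_{λ₁,γ}(β) + Δ₂·g_{λ₂,γ}(β) is strictly convex on ℝ. (Strict convexity of the majorized coordinate-wise objective, used in the proof of Theorem 3 to guarantee a unique minimizer.) -/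
/-- Auxiliary: `F c t = ∫_0^t max 1 (x/c)`. One has
`mcPlus lam gam b = F (lam*gam) |b| - b²/(2 lam gam)` and `F` is convex. -/
noncomputable def auxF (c t : ℝ) : ℝ := ∫ x in (0 : ℝ)..t, max 1 (x / c)

lemma auxF_hasDerivAt (c t : ℝ) : HasDerivAt (auxF c) (max 1 (t / c)) t := by
  have hcont : Continuous fun x : ℝ => max 1 (x / c) :=
    continuous_const.max (continuous_id.div_const c)
  exact intervalIntegral.integral_hasDerivAt_right
    (hcont.intervalIntegrable 0 t)
    (hcont.stronglyMeasurableAtFilter _ _)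
    hcont.continuousAt

lemma auxF_deriv (c : ℝ) : deriv (auxF c) = fun t => max 1 (t / c) := by
  funext t; exact (auxF_hasDerivAt c t).deriv

lemma auxF_monotone (c : ℝ) : Monotone (auxF c) := by
  have : StrictMono (auxF c) := by
    apply strictMono_of_deriv_pos
    intro t
    rw [auxF_deriv]
    exact lt_max_of_lt_left one_pos
  exact this.monotone

lemma auxF_convex (c : ℝ) (hc : 0 < c) : ConvexOn ℝ Set.univ (auxF c) := by
  apply MonotoneOn.convexOn_of_deriv convex_univ
  · exact fun t _ => ((auxF_hasDerivAt c t).continuousAt).continuousWithinAt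
  · intro t ht
    exact ((auxF_hasDerivAt c t).differentiableAt).differentiableWithinAt
  · rw [auxF_deriv]
    intro a _ b _ hab
    exact max_le_max le_rfl (div_le_div_of_nonneg_right hab hc.le)

lemma mcPlus_eq (lam gam b : ℝ) :
    mcPlus lam gam b = auxF (lam * gam) |b| - b ^ 2 / (2 * (lam * gam)) := by
  set c := lam * gam with hc
  have key : ∀ x : ℝ, max (1 - x / c) 0 = max 1 (x / c) - x / c := by
    intro x
    rcases le_total (x / c) 1 with h | h
    · rw [max_eq_left (by linarith : (0:ℝ) ≤ 1 - x / c), max_eq_left h]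
    · rw [max_eq_right (by linarith : 1 - x / c ≤ (0:ℝ)), max_eq_right h]
      exact (sub_self _).symm
  have h1 : mcPlus lam gam b = ∫ x in (0:ℝ)..|b|, (max 1 (x / c) - x / c) := by
    unfold mcPlus
    exact intervalIntegral.integral_congr fun x _ => key x
  have hcont : Continuous fun x : ℝ => max 1 (x / c) :=
    continuous_const.max (continuous_id.div_const c)
  have hcont2 : Continuous fun x : ℝ => x / c := continuous_id.div_const c
  rw [h1, intervalIntegral.integral_sub (hcont.intervalIntegrable 0 _)
    (hcont2.intervalIntegrable 0 _)]
  have h2 : (∫ x in (0:ℝ)..|b|, x / c) = b ^ 2 / (2 * c) := by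
    rw [intervalIntegral.integral_div, integral_id, sq_abs]
    ring
  rw [h2]
  rfl

lemma abs_image_univ : (abs '' (Set.univ : Set ℝ)) = Set.Ici 0 := by
  ext y
  simp only [Set.mem_image, Set.mem_univ, true_and, Set.mem_Ici]
  constructor
  · rintro ⟨x, rfl⟩; exact abs_nonneg x
  · intro hy; exact ⟨y, abs_of_nonneg hy⟩

lemma convexOn_abs' : ConvexOn ℝ (Set.univ : Set ℝ) (abs : ℝ → ℝ) := by
  have := convexOn_univ_norm (E := ℝ)
  have h : (abs : ℝ → ℝ) = norm := by funext x; exact (Real.norm_eq_abs x).symm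
  rw [h]; exact this

lemma auxF_abs_convex (c : ℝ) (hc : 0 < c) :
    ConvexOn ℝ Set.univ (fun b : ℝ => auxF c |b|) := by
  have h : ConvexOn ℝ Set.univ (auxF c ∘ abs) :=
    ConvexOn.comp ((auxF_convex c hc).subset (Set.subset_univ _)
        (by rw [abs_image_univ]; exact convex_Ici 0))
      convexOn_abs' ((auxF_monotone c).monotoneOn _)
  exact h

lemma strictConvexOn_const_mul {f : ℝ → ℝ} (c : ℝ) (hc : 0 < c)
    (hf : StrictConvexOn ℝ Set.univ f) :
    StrictConvexOn ℝ Set.univ (fun x => c * f x) := by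
  refine ⟨convex_univ, fun x hx y hy hxy a b ha hb hab => ?_⟩
  have h := hf.2 hx hy hxy ha hb hab
  simp only [smul_eq_mul] at *
  nlinarith [mul_lt_mul_of_pos_left h hc]

/-- Strict convexity of the majorized coordinate-wise objective
`h(β) = (1/2)(β − z)² + Δ₁·g_{λ₁,γ}(β) + Δ₂·g_{λ₂,γ}(β)` when `γ > 2`. -/
theorem majorized_objective_strictConvexOn (gam l1 l2 d1 d2 z : ℝ)
    (hgam : 2 < gam) (hl2 : 0 < l2) (hl12 : l2 ≤ l1)
    (hd1 : 0 < d1) (hd1' : d1 ≤ l1) (hd2 : 0 < d2) (hd2' : d2 ≤ l2) :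
    StrictConvexOn ℝ Set.univ (fun β : ℝ =>
      1 / 2 * (β - z) ^ 2 + d1 * mcPlus l1 gam β + d2 * mcPlus l2 gam β) := by
  have hl1 : 0 < l1 := lt_of_lt_of_le hl2 hl12
  have hgam0 : 0 < gam := by linarith
  have hc1 : 0 < l1 * gam := mul_pos hl1 hgam0
  have hc2 : 0 < l2 * gam := mul_pos hl2 hgam0
  set a : ℝ := 1 / 2 - d1 / (2 * (l1 * gam)) - d2 / (2 * (l2 * gam)) with ha_def
  have ha : 0 < a := by
    have h1 : d1 / (2 * (l1 * gam)) ≤ 1 / (2 * gam) := by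
      rw [div_le_div_iff₀ (by positivity) (by positivity)]
      nlinarith
    have h2 : d2 / (2 * (l2 * gam)) ≤ 1 / (2 * gam) := by
      rw [div_le_div_iff₀ (by positivity) (by positivity)]
      nlinarith
    have h3 : 1 / (2 * gam) < 1 / 4 := by
      rw [div_lt_div_iff₀ (by positivity) (by norm_num)]
      nlinarith
    rw [ha_def]; linarith
  have hfun : (fun β : ℝ =>
      1 / 2 * (β - z) ^ 2 + d1 * mcPlus l1 gam β + d2 * mcPlus l2 gam β)
      = fun β : ℝ => (a * β ^ 2 + (-z * β + z ^ 2 / 2))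
          + (d1 * auxF (l1 * gam) |β| + d2 * auxF (l2 * gam) |β|) := by
    funext β
    rw [mcPlus_eq, mcPlus_eq, ha_def]
    field_simp
    ring
  rw [hfun]
  have hquad : StrictConvexOn ℝ Set.univ (fun β : ℝ => a * β ^ 2 + (-z * β + z ^ 2 / 2)) := by
    apply StrictConvexOn.add_convexOn
    · exact strictConvexOn_const_mul a ha
        (Even.strictConvexOn_pow (by norm_num) (by norm_num))
    · refine ⟨convex_univ, fun x _ y _ p q hp hq hpq => le_of_eq ?_⟩
      simp only [smul_eq_mul]
      linear_combination (-(z ^ 2) / 2) * hpq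
  have hconv : ConvexOn ℝ Set.univ
      (fun β : ℝ => d1 * auxF (l1 * gam) |β| + d2 * auxF (l2 * gam) |β|) := by
    apply ConvexOn.add
    · simpa [smul_eq_mul] using (auxF_abs_convex (l1 * gam) hc1).smul hd1.le
    · simpa [smul_eq_mul] using (auxF_abs_convex (l2 * gam) hc2).smul hd2.le
  exact hquad.add_convexOn hconv
end
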